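/- Let A₁, A₂ be positive semidefinite matrices on a finite-dimensional complex Hilbert space, let p ∈ [0,1], and set A = p·A₁ + (1−p)·A₂. Then, in the Löwner order, −A log A ≤ −p·A₁ log A₁ − (1−p)·A₂ log A₂ + h_{A₁,A₂}(p)·𝟙, where h_{A₁,A₂}(p) = −p·log(p)·tr[A₁] − (1−p)·log(1−p)·tr[A₂] (with the convention 0·log 0 = 0). -/

import Mathlib

open Matrix MeasureTheory
open scoped Kronecker Classical ComplexOrder

noncomputable section

namespace QPaper

variable {n : Type*}

/-- A quantum state: positive semidefinite matrix with trace one. -/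
def IsState [Fintype n] (ρ : Matrix n n ℂ) : Prop :=
  ρ.PosSemidef ∧ ρ.trace = 1

/-- The trace norm of a matrix: `tr √(XᴴX)`. -/
noncomputable def traceNorm [Fintype n] [DecidableEq n] (X : Matrix n n ℂ) : ℝ :=
  (((Matrix.posSemidef_conjTranspose_mul_self X).1.eigenvectorUnitary : Matrix n n ℂ) *
      Matrix.diagonal (((↑) : ℝ → ℂ) ∘ (√·) ∘ (Matrix.posSemidef_conjTranspose_mul_self X).1.eigenvalues) *
      (star (Matrix.posSemidef_conjTranspose_mul_self X).1.eigenvectorUnitary : Matrix n n ℂ)).trace.re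

/-- Functional calculus for Hermitian matrices: apply `f` to the eigenvalues. -/
noncomputable def matFun [Fintype n] [DecidableEq n] (f : ℝ → ℂ) (A : Matrix n n ℂ) :
    Matrix n n ℂ :=
  if hA : A.IsHermitian then
    (hA.eigenvectorUnitary : Matrix n n ℂ) *
      Matrix.diagonal (fun i => f (hA.eigenvalues i)) *
        (hA.eigenvectorUnitary : Matrix n n ℂ)ᴴ
  else 0

/-- Matrix logarithm on the support (0 ↦ 0). -/
noncomputable def mlog [Fintype n] [DecidableEq n] (A : Matrix n n ℂ) : Matrix n n ℂ :=
  matFun (fun x => (Real.log x : ℂ)) A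

/-- Real matrix powers on the support (Moore-Penrose style, 0 ↦ 0 for r ≠ 0). -/
noncomputable def mpow [Fintype n] [DecidableEq n] (A : Matrix n n ℂ) (r : ℝ) : Matrix n n ℂ :=
  matFun (fun x => ((x ^ r : ℝ) : ℂ)) A

/-- Complex matrix powers on the support (0 ↦ 0). -/
noncomputable def mcpow [Fintype n] [DecidableEq n] (A : Matrix n n ℂ) (z : ℂ) : Matrix n n ℂ :=
  matFun (fun x => if x = 0 then 0 else (x : ℂ) ^ z) A

/-- The matrix `A log A`, functional calculus for `x ↦ x log x` (0 ↦ 0). -/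
noncomputable def mXLogX [Fintype n] [DecidableEq n] (A : Matrix n n ℂ) : Matrix n n ℂ :=
  matFun (fun x => ((x * Real.log x : ℝ) : ℂ)) A

/-- Umegaki relative entropy `D(ρ‖K) = tr[ρ (log ρ - log K)]`. -/
noncomputable def relEnt [Fintype n] [DecidableEq n] (ρ K : Matrix n n ℂ) : ℝ :=
  ((ρ * (mlog ρ - mlog K)).trace).re

/-- Belavkin–Staszewski entropy `D̂(ρ‖K) = tr[ρ log(ρ^{1/2} K⁻¹ ρ^{1/2})]`. -/
noncomputable def bsEnt [Fintype n] [DecidableEq n] (ρ K : Matrix n n ℂ) : ℝ :=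
  ((ρ * mlog (mpow ρ (1/2) * mpow K (-1) * mpow ρ (1/2))).trace).re

/-- von Neumann entropy. -/
noncomputable def vnEnt [Fintype n] [DecidableEq n] (ρ : Matrix n n ℂ) : ℝ :=
  -(((ρ * mlog ρ).trace).re)

/-- Operator norm of a matrix. -/
noncomputable def opNorm [Fintype n] [DecidableEq n] (X : Matrix n n ℂ) : ℝ :=
  ‖Matrix.toEuclideanCLM (𝕜 := ℂ) X‖

/-- `ker K ⊆ ker ρ`. -/
def kerLE [Fintype n] (K ρ : Matrix n n ℂ) : Prop :=
  ∀ v : n → ℂ, K.mulVec v = 0 → ρ.mulVec v = 0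

/-- partial trace over the first factor. -/
noncomputable def ptrA {a b : Type*} [Fintype a] (ρ : Matrix (a × b) (a × b) ℂ) :
    Matrix b b ℂ :=
  Matrix.of fun i j => ∑ x : a, ρ (x, i) (x, j)

/-- partial trace over the second factor. -/
noncomputable def ptrB {a b : Type*} [Fintype b] (ρ : Matrix (a × b) (a × b) ℂ) :
    Matrix a a ℂ :=
  Matrix.of fun i j => ∑ x : b, ρ (i, x) (j, x)

/-- partial trace over the middle factor of a tripartite system. -/
noncomputable def ptrMid {a b c : Type*} [Fintype b]
    (ρ : Matrix (a × b × c) (a × b × c) ℂ) : Matrix (a × c) (a × c) ℂ :=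
  Matrix.of fun p q => ∑ y : b, ρ (p.1, y, p.2) (q.1, y, q.2)

/-- Conditional entropy `H_ρ(A|B) = S(ρ_{AB}) - S(ρ_B)`. -/
noncomputable def condEnt {a b : Type*} [Fintype a] [Fintype b] [DecidableEq a] [DecidableEq b]
    (ρ : Matrix (a × b) (a × b) ℂ) : ℝ :=
  vnEnt ρ - vnEnt (ptrA ρ)

/-- Mutual information `I_ρ(A:B) = S(ρ_A) + S(ρ_B) - S(ρ_{AB})`. -/
noncomputable def mutInfo {a b : Type*} [Fintype a] [Fintype b] [DecidableEq a] [DecidableEq b]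
    (ρ : Matrix (a × b) (a × b) ℂ) : ℝ :=
  vnEnt (ptrB ρ) + vnEnt (ptrA ρ) - vnEnt ρ

/-- Conditional mutual information `I_ρ(A:B|C)`. -/
noncomputable def condMutInfo {a b c : Type*} [Fintype a] [Fintype b] [Fintype c]
    [DecidableEq a] [DecidableEq b] [DecidableEq c]
    (ρ : Matrix (a × b × c) (a × b × c) ℂ) : ℝ :=
  vnEnt (ptrMid ρ) + vnEnt (ptrA ρ) - vnEnt (ptrA (ptrA ρ)) - vnEnt ρ

/-- BS-conditional entropy `Ĥ_ρ(A|B) = -D̂(ρ ‖ 𝟙_A ⊗ ρ_B)`. -/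
noncomputable def bsCondEnt {a b : Type*} [Fintype a] [Fintype b] [DecidableEq a] [DecidableEq b]
    (ρ : Matrix (a × b) (a × b) ℂ) : ℝ :=
  -(bsEnt ρ ((1 : Matrix a a ℂ) ⊗ₖ ptrA ρ))

/-- BS-mutual information `Î_ρ(A:B) = D̂(ρ ‖ ρ_A ⊗ ρ_B)`. -/
noncomputable def bsMutInfo {a b : Type*} [Fintype a] [Fintype b] [DecidableEq a] [DecidableEq b]
    (ρ : Matrix (a × b) (a × b) ℂ) : ℝ :=
  bsEnt ρ (ptrB ρ ⊗ₖ ptrA ρ)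

/-- BS-conditional mutual information `Î_ρ(A:B|C) = Ĥ_ρ(A|C) - Ĥ_ρ(A|BC)`. -/
noncomputable def bsCondMutInfo {a b c : Type*} [Fintype a] [Fintype b] [Fintype c]
    [DecidableEq a] [DecidableEq b] [DecidableEq c]
    (ρ : Matrix (a × b × c) (a × b × c) ℂ) : ℝ :=
  bsCondEnt (ptrMid ρ) - bsCondEnt (a := a) (b := b × c) ρ

/-- Binary entropy. -/
noncomputable def binEnt (p : ℝ) : ℝ :=
  -(p * Real.log p) - (1 - p) * Real.log (1 - p)

/-- The function `f_{c₁,c₂}`. -/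
noncomputable def fcc (c₁ c₂ p : ℝ) : ℝ :=
  p * Real.log (p + (1 - p) * c₁) + (1 - p) * Real.log ((1 - p) + p * c₂)

/-- The probability density `β₀`. -/
noncomputable def beta0 (t : ℝ) : ℝ :=
  (Real.pi / 2) * (Real.cosh (Real.pi * t) + 1)⁻¹


end QPaper

/-!
Write `f x = x log x` and `D = p f(A₁) + (1 - p) f(A₂) - f(A)`. Operator convexity of `f` gives
`D ≥ 0`, hence `D ≤ tr D • 𝟙`. Since `f(cX) = c f(X) + (c log c) X`, the bound `tr D ≤ h(p)` is
exactly trace superadditivity `tr f(B) + tr f(C) ≤ tr f(B + C)` for `B = p A₁`, `C = (1 - p) A₂`.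

Both properties come from `x log x = ∫₀¹ x (x - 1) / (1 + t (x - 1)) dt`: up to terms affine in `x`,
the integrand is a positive multiple of `(t x + 1 - t)⁻¹`, and the matrix inverse is operator convex
and antitone on positive definite matrices by the variational formula
`⟪v, S⁻¹ v⟫ = max_u (2 Re ⟪v, u⟫ - ⟪u, S u⟫)`.
-/

open Set

def xlogxIntegrand (t x : ℝ) : ℝ := x * (x - 1) / (1 + t * (x - 1))

lemma xlogxIntegrand_eq_of_mem_Ioo {t x : ℝ} (ht : t ∈ Ioo 0 1) (hx : 0 ≤ x) :
    xlogxIntegrand t x = t⁻¹ * (x - x * (t * x + (1 - t))⁻¹) := by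
  have hd : 0 < t * x + (1 - t) := by nlinarith [ht.1, ht.2]
  rw [xlogxIntegrand, show 1 + t * (x - 1) = t * x + (1 - t) by ring]
  have hD : x - x * (t * x + (1 - t))⁻¹ = t * (x * (x - 1) / (t * x + (1 - t))) := by
    linear_combination (-x) * mul_inv_cancel₀ hd.ne'
  rw [hD, inv_mul_cancel_left₀ ht.1.ne']

lemma one_add_mul_sub_one_pos {t x : ℝ} (ht : t ∈ Icc 0 1) (hx : 0 < x) :
    0 < 1 + t * (x - 1) := by
  rcases ht.2.lt_or_eq with ht₁ | rfl
  · nlinarith [mul_nonneg ht.1 hx.le]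
  · linarith

lemma hasDerivAt_mul_log_one_add_mul_sub_one {t x : ℝ} (hd : 0 < 1 + t * (x - 1)) :
    HasDerivAt (fun s => x * Real.log (1 + s * (x - 1))) (xlogxIntegrand t x) t := by
  have h := (((hasDerivAt_id t).mul_const (x - 1)).const_add 1).log hd.ne' |>.const_mul x
  rw [show xlogxIntegrand t x = x * (1 * (x - 1) / (1 + t * (x - 1))) by
    rw [xlogxIntegrand]; ring]
  exact h

lemma intervalIntegrable_xlogxIntegrand {x : ℝ} (hx : 0 ≤ x) :
    IntervalIntegrable (xlogxIntegrand · x) volume 0 1 := by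
  rcases hx.eq_or_lt with rfl | hx
  · simp [xlogxIntegrand]
  · refine ContinuousOn.intervalIntegrable (continuousOn_const.div (by fun_prop) fun t ht => ?_)
    rw [uIcc_of_le zero_le_one] at ht
    exact (one_add_mul_sub_one_pos ht hx).ne'

lemma integral_xlogxIntegrand {x : ℝ} (hx : 0 ≤ x) :
    ∫ t in (0:ℝ)..1, xlogxIntegrand t x = x * Real.log x := by
  rcases hx.eq_or_lt with rfl | hx
  · simp [xlogxIntegrand]
  rw [intervalIntegral.integral_eq_sub_of_hasDerivAt (f := fun s => x * Real.log (1 + s * (x - 1)))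
    (fun t ht => hasDerivAt_mul_log_one_add_mul_sub_one ?_) (intervalIntegrable_xlogxIntegrand hx.le)]
  · simp
  · rw [uIcc_of_le zero_le_one] at ht
    exact one_add_mul_sub_one_pos ht hx

lemma integral_nonneg_of_forall_mem_Ioo {a b : ℝ} (hab : a ≤ b) {f : ℝ → ℝ}
    (hf : ∀ t ∈ Ioo a b, 0 ≤ f t) : 0 ≤ ∫ t in a..b, f t := by
  rw [intervalIntegral.integral_of_le hab, integral_Ioc_eq_integral_Ioo]
  exact setIntegral_nonneg measurableSet_Ioo hf

namespace Matrix

variable {n 𝕜 : Type*} [RCLike 𝕜]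

lemma PosSemidef.posDef_smul_add_smul_one [DecidableEq n] {A : Matrix n n 𝕜} (hA : A.PosSemidef)
    {t : ℝ} (ht₀ : 0 ≤ t) (ht₁ : t < 1) : (t • A + (1 - t) • 1).PosDef :=
  add_comm ((1 - t) • 1) (t • A) ▸
    (PosDef.one.smul (sub_pos.mpr ht₁)).add_posSemidef (hA.smul ht₀)

variable [Fintype n]

lemma IsHermitian.posSemidef_of_re_dotProduct_nonneg {M : Matrix n n 𝕜} (hM : M.IsHermitian)
    (h : ∀ v : n → 𝕜, 0 ≤ RCLike.re (star v ⬝ᵥ (M *ᵥ v))) : M.PosSemidef :=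
  .of_dotProduct_mulVec_nonneg hM fun v =>
    RCLike.nonneg_iff.mpr ⟨h v, hM.im_star_dotProduct_mulVec_self v⟩

lemma re_star_dotProduct_comm (u v : n → 𝕜) :
    RCLike.re (star u ⬝ᵥ v) = RCLike.re (star v ⬝ᵥ u) := by
  rw [star_dotProduct, RCLike.star_def, RCLike.conj_re]

open scoped MatrixOrder in
lemma PosSemidef.re_trace_mul_nonneg {A B : Matrix n n 𝕜} (hA : A.PosSemidef)
    (hB : B.PosSemidef) : 0 ≤ RCLike.re (A * B).trace := by
  set C := CFC.sqrt A
  have hC : Cᴴ = C := (CFC.sqrt_nonneg A).isSelfAdjoint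
  have hCC : C * C = A := CFC.sqrt_mul_sqrt_self A hA.nonneg
  have hCBC : (A * B).trace = (Cᴴ * B * C).trace := by
    rw [hC, ← hCC, mul_assoc, trace_mul_comm, mul_assoc]
  rw [hCBC]
  exact (RCLike.nonneg_iff.mp (hB.conjTranspose_mul_mul_same C).trace_nonneg).1

variable [DecidableEq n]

lemma PosDef.isGreatest_re_dotProduct_inv_mulVec {S : Matrix n n 𝕜} (hS : S.PosDef) (v : n → 𝕜) :
    IsGreatest (range fun u => 2 * RCLike.re (star v ⬝ᵥ u) - RCLike.re (star u ⬝ᵥ (S *ᵥ u)))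
      (RCLike.re (star v ⬝ᵥ (S⁻¹ *ᵥ v))) := by
  set w := S⁻¹ *ᵥ v
  have hw : S *ᵥ w = v := by
    rw [mulVec_mulVec, mul_nonsing_inv _ ((isUnit_iff_isUnit_det S).mp hS.isUnit), one_mulVec]
  have hS_adj (u : n → 𝕜) : star w ⬝ᵥ (S *ᵥ u) = star v ⬝ᵥ u := by
    rw [dotProduct_mulVec, ← hS.isHermitian.eq, ← star_mulVec, hw]
  refine ⟨⟨w, ?_⟩, ?_⟩
  · simp only [hw, re_star_dotProduct_comm w v]
    ring
  · rintro _ ⟨u, rfl⟩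
    have := hS.posSemidef.re_dotProduct_nonneg (u - w)
    simp only [mulVec_sub, star_sub, sub_dotProduct, dotProduct_sub, map_sub, hw, hS_adj] at this
    rw [re_star_dotProduct_comm u v, re_star_dotProduct_comm w v] at this
    dsimp only
    linarith

lemma PosDef.posSemidef_inv_sub_inv {S T : Matrix n n 𝕜} (hS : S.PosDef)
    (hST : (T - S).PosSemidef) : (S⁻¹ - T⁻¹).PosSemidef := by
  have hT : T.PosDef := by simpa using hS.add_posSemidef hST
  refine (hS.inv.isHermitian.sub hT.inv.isHermitian).posSemidef_of_re_dotProduct_nonneg fun v => ?_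
  obtain ⟨⟨u, hu⟩, -⟩ := hT.isGreatest_re_dotProduct_inv_mulVec v
  have hle := (hS.isGreatest_re_dotProduct_inv_mulVec v).2 ⟨u, rfl⟩
  have hgap := hST.re_dotProduct_nonneg u
  simp only [sub_mulVec, dotProduct_sub, map_sub] at hgap ⊢
  dsimp only at hu hle
  linarith

lemma PosDef.posSemidef_smul_inv_add_smul_inv_sub_inv {S T : Matrix n n 𝕜} (hS : S.PosDef)
    (hT : T.PosDef) {p q : ℝ} (hp : 0 ≤ p) (hq : 0 ≤ q) (hpq : p + q = 1) :
    (p • S⁻¹ + q • T⁻¹ - (p • S + q • T)⁻¹).PosSemidef := by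
  have hM : (p • S + q • T).PosDef := by
    rcases hp.eq_or_lt with rfl | hp
    · simpa [show q = 1 by linarith] using hT
    · exact (hS.smul hp).add_posSemidef (hT.posSemidef.smul hq)
  refine ((hS.inv.isHermitian.smul (.all p)).add (hT.inv.isHermitian.smul (.all q))).sub
    hM.inv.isHermitian |>.posSemidef_of_re_dotProduct_nonneg fun v => ?_
  obtain ⟨⟨u, hu⟩, -⟩ := hM.isGreatest_re_dotProduct_inv_mulVec v
  have hS' := (hS.isGreatest_re_dotProduct_inv_mulVec v).2 ⟨u, rfl⟩
  have hT' := (hT.isGreatest_re_dotProduct_inv_mulVec v).2 ⟨u, rfl⟩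
  simp only [add_mulVec, sub_mulVec, smul_mulVec, dotProduct_add, dotProduct_sub, dotProduct_smul,
    map_add, map_sub, RCLike.smul_re] at hu ⊢
  dsimp only at hu hS' hT'
  obtain rfl : q = 1 - p := by linarith
  linarith [mul_le_mul_of_nonneg_left hS' hp, mul_le_mul_of_nonneg_left hT' hq]

lemma mul_inv_smul_add_smul_one {X : Matrix n n 𝕜} {t : ℝ} (ht : t ≠ 0)
    (hX : IsUnit (t • X + (1 - t) • 1 : Matrix n n 𝕜).det) :
    X * (t • X + (1 - t) • 1)⁻¹ = t⁻¹ • (1 - (1 - t) • (t • X + (1 - t) • 1)⁻¹) := by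
  set S := t • X + (1 - t) • (1 : Matrix n n 𝕜)
  have hXS : t • X = S - (1 - t) • 1 := by simp [S]
  rw [eq_inv_smul_iff₀ ht, ← smul_mul_assoc, hXS, sub_mul, mul_nonsing_inv _ hX, smul_mul_assoc,
    one_mul]

open scoped MatrixOrder in
lemma PosSemidef.cfc_xlogxIntegrand_eq_smul_sub_mul_inv {A : Matrix n n 𝕜} (hA : A.PosSemidef)
    {t : ℝ} (ht : t ∈ Ioo 0 1) :
    cfc (xlogxIntegrand t) A = t⁻¹ • (A - A * (t • A + (1 - t) • 1)⁻¹) := by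
  have hcont (g : ℝ → ℝ) : ContinuousOn g (spectrum ℝ A) := A.finite_real_spectrum.continuousOn g
  have hspec : ∀ x ∈ spectrum ℝ A, 0 ≤ x := fun x hx => spectrum_nonneg_of_nonneg hA.nonneg hx
  have hS : cfc (fun x => t * x + (1 - t)) A = t • A + (1 - t) • 1 := by
    rw [cfc_add _ _ _ (hcont _) (hcont _), cfc_const_mul_id t A, cfc_const (1 - t) A,
      Algebra.algebraMap_eq_smul_one]
  have hR : cfc (fun x => (t * x + (1 - t))⁻¹) A = (t • A + (1 - t) • 1)⁻¹ := by
    rw [cfc_inv _ _ (fun x hx => by nlinarith [hspec x hx, ht.1, ht.2]) (hcont _), hS,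
      nonsing_inv_eq_ringInverse]
  calc cfc (xlogxIntegrand t) A = cfc (fun x => t⁻¹ * (x - x * (t * x + (1 - t))⁻¹)) A :=
        cfc_congr fun x hx => xlogxIntegrand_eq_of_mem_Ioo ht (hspec x hx)
    _ = t⁻¹ • (A - A * (t • A + (1 - t) • 1)⁻¹) := by
      rw [cfc_const_mul _ _ _ (hcont _), cfc_sub _ _ _ (hcont _) (hcont _),
        cfc_mul _ _ _ (hcont _) (hcont _), cfc_id' ℝ A, hR]

lemma PosSemidef.cfc_xlogxIntegrand_eq_add_smul_inv {A : Matrix n n 𝕜} (hA : A.PosSemidef)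
    {t : ℝ} (ht : t ∈ Ioo 0 1) :
    cfc (xlogxIntegrand t) A = t⁻¹ • A - (t⁻¹ * t⁻¹) • 1 +
      (t⁻¹ * t⁻¹ * (1 - t)) • (t • A + (1 - t) • 1)⁻¹ := by
  rw [hA.cfc_xlogxIntegrand_eq_smul_sub_mul_inv ht, mul_inv_smul_add_smul_one ht.1.ne'
    ((isUnit_iff_isUnit_det _).mp (hA.posDef_smul_add_smul_one ht.1.le ht.2).isUnit)]
  module

lemma PosSemidef.posSemidef_convex_cfc_xlogxIntegrand {A₁ A₂ : Matrix n n 𝕜}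
    (h₁ : A₁.PosSemidef) (h₂ : A₂.PosSemidef) {p q : ℝ} (hp : 0 ≤ p) (hq : 0 ≤ q)
    (hpq : p + q = 1) {t : ℝ} (ht : t ∈ Ioo 0 1) :
    (p • cfc (xlogxIntegrand t) A₁ + q • cfc (xlogxIntegrand t) A₂ -
      cfc (xlogxIntegrand t) (p • A₁ + q • A₂)).PosSemidef := by
  obtain rfl : q = 1 - p := by linarith
  have hA := (h₁.smul hp).add (h₂.smul hq)
  rw [h₁.cfc_xlogxIntegrand_eq_add_smul_inv ht, h₂.cfc_xlogxIntegrand_eq_add_smul_inv ht,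
    hA.cfc_xlogxIntegrand_eq_add_smul_inv ht]
  have hS : t • (p • A₁ + (1 - p) • A₂) + (1 - t) • (1 : Matrix n n 𝕜) =
      p • (t • A₁ + (1 - t) • 1) + (1 - p) • (t • A₂ + (1 - t) • 1) := by module
  rw [hS]
  have := (PosDef.posSemidef_smul_inv_add_smul_inv_sub_inv
    (h₁.posDef_smul_add_smul_one ht.1.le ht.2) (h₂.posDef_smul_add_smul_one ht.1.le ht.2)
    hp hq (by ring)).smul
    (mul_nonneg (by have := ht.1; positivity) (sub_nonneg.mpr ht.2.le) : 0 ≤ t⁻¹ * t⁻¹ * (1 - t))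
  convert this using 1
  module

lemma PosSemidef.re_trace_cfc_xlogxIntegrand_add_le {B C : Matrix n n 𝕜} (hB : B.PosSemidef)
    (hC : C.PosSemidef) {t : ℝ} (ht : t ∈ Ioo 0 1) :
    RCLike.re (cfc (xlogxIntegrand t) B).trace + RCLike.re (cfc (xlogxIntegrand t) C).trace ≤
      RCLike.re (cfc (xlogxIntegrand t) (B + C)).trace := by
  have hanti {X Y : Matrix n n 𝕜} (hX : X.PosSemidef) (hY : Y.PosSemidef) :
      ((t • X + (1 - t) • 1)⁻¹ - (t • (X + Y) + (1 - t) • 1)⁻¹).PosSemidef :=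
    (hX.posDef_smul_add_smul_one ht.1.le ht.2).posSemidef_inv_sub_inv
      (by convert hY.smul ht.1.le using 1; module)
  have hBC := hB.re_trace_mul_nonneg (hanti hB hC)
  have hCB := hC.re_trace_mul_nonneg (add_comm B C ▸ hanti hC hB)
  rw [hB.cfc_xlogxIntegrand_eq_smul_sub_mul_inv ht, hC.cfc_xlogxIntegrand_eq_smul_sub_mul_inv ht,
    (hB.add hC).cfc_xlogxIntegrand_eq_smul_sub_mul_inv ht]
  simp only [mul_sub, add_mul, trace_smul, trace_sub, trace_add, map_add, map_sub,
    RCLike.smul_re] at hBC hCB ⊢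
  linarith [mul_nonneg (inv_nonneg.mpr ht.1.le) (add_nonneg hBC hCB)]

lemma IsHermitian.map_cfc_eq_sum {A : Matrix n n 𝕜} (hA : A.IsHermitian)
    (L : Matrix n n 𝕜 →ₗ[ℝ] ℝ) (g : ℝ → ℝ) :
    L (cfc g A) = ∑ i, g (hA.eigenvalues i) * L ((hA.eigenvectorUnitary : Matrix n n 𝕜) *
      single i i 1 * star (hA.eigenvectorUnitary : Matrix n n 𝕜)) := by
  have hdiag : diagonal (RCLike.ofReal ∘ g ∘ hA.eigenvalues) =
      ∑ i, g (hA.eigenvalues i) • (single i i 1 : Matrix n n 𝕜) := by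
    rw [← sum_single_eq_diagonal]
    refine Finset.sum_congr rfl fun i _ => ?_
    rw [smul_single, RCLike.real_smul_eq_coe_mul, mul_one]
    rfl
  rw [hA.cfc_eq, IsHermitian.cfc, Unitary.conjStarAlgAut_apply, hdiag, Finset.mul_sum,
    Finset.sum_mul, map_sum]
  simp only [mul_smul_comm, smul_mul_assoc, map_smul, smul_eq_mul]

lemma PosSemidef.intervalIntegrable_map_cfc_xlogxIntegrand {A : Matrix n n 𝕜}
    (hA : A.PosSemidef) (L : Matrix n n 𝕜 →ₗ[ℝ] ℝ) :
    IntervalIntegrable (fun t => L (cfc (xlogxIntegrand t) A)) volume 0 1 := by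
  simp only [hA.1.map_cfc_eq_sum]
  simpa only [Finset.sum_fn] using IntervalIntegrable.sum Finset.univ fun i _ =>
    (intervalIntegrable_xlogxIntegrand (hA.eigenvalues_nonneg i)).mul_const _

lemma PosSemidef.integral_map_cfc_xlogxIntegrand {A : Matrix n n 𝕜} (hA : A.PosSemidef)
    (L : Matrix n n 𝕜 →ₗ[ℝ] ℝ) :
    ∫ t in (0:ℝ)..1, L (cfc (xlogxIntegrand t) A) = L (cfc (fun x => x * Real.log x) A) := by
  simp only [hA.1.map_cfc_eq_sum]
  rw [intervalIntegral.integral_finsetSum fun i _ =>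
    (intervalIntegrable_xlogxIntegrand (hA.eigenvalues_nonneg i)).mul_const _]
  simp only [intervalIntegral.integral_mul_const, integral_xlogxIntegrand (hA.eigenvalues_nonneg _)]

theorem PosSemidef.posSemidef_convex_cfc_xlogx {A₁ A₂ : Matrix n n 𝕜} (h₁ : A₁.PosSemidef)
    (h₂ : A₂.PosSemidef) {p q : ℝ} (hp : 0 ≤ p) (hq : 0 ≤ q) (hpq : p + q = 1) :
    (p • cfc (fun x => x * Real.log x) A₁ + q • cfc (fun x => x * Real.log x) A₂ -
      cfc (fun x => x * Real.log x) (p • A₁ + q • A₂)).PosSemidef := by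
  have hA := (h₁.smul hp).add (h₂.smul hq)
  have hherm (X : Matrix n n 𝕜) : (cfc (fun x => x * Real.log x) X).IsHermitian :=
    cfc_predicate _ X
  refine (((hherm _).smul (.all p)).add ((hherm _).smul (.all q))).sub (hherm _)
    |>.posSemidef_of_re_dotProduct_nonneg fun v => ?_
  let L : Matrix n n 𝕜 →ₗ[ℝ] ℝ :=
    { toFun M := RCLike.re (star v ⬝ᵥ (M *ᵥ v))
      map_add' M N := by simp only [add_mulVec, dotProduct_add, map_add]
      map_smul' c M := by
        simp only [smul_mulVec, dotProduct_smul, RCLike.smul_re, RingHom.id_apply, smul_eq_mul] }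
  have hL (t : ℝ) (ht : t ∈ Ioo 0 1) : 0 ≤ p * L (cfc (xlogxIntegrand t) A₁) +
      q * L (cfc (xlogxIntegrand t) A₂) - L (cfc (xlogxIntegrand t) (p • A₁ + q • A₂)) := by
    have := (h₁.posSemidef_convex_cfc_xlogxIntegrand h₂ hp hq hpq ht).re_dotProduct_nonneg v
    change 0 ≤ L _ at this
    simpa only [map_sub, map_add, map_smul, smul_eq_mul] using this
  change 0 ≤ L _
  rw [map_sub, map_add, map_smul, map_smul, smul_eq_mul, smul_eq_mul,
    ← h₁.integral_map_cfc_xlogxIntegrand, ← h₂.integral_map_cfc_xlogxIntegrand,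
    ← hA.integral_map_cfc_xlogxIntegrand, ← intervalIntegral.integral_const_mul,
    ← intervalIntegral.integral_const_mul, ← intervalIntegral.integral_add,
    ← intervalIntegral.integral_sub]
  · exact integral_nonneg_of_forall_mem_Ioo zero_le_one hL
  · exact ((h₁.intervalIntegrable_map_cfc_xlogxIntegrand L).const_mul p).add
      ((h₂.intervalIntegrable_map_cfc_xlogxIntegrand L).const_mul q)
  · exact hA.intervalIntegrable_map_cfc_xlogxIntegrand L
  · exact (h₁.intervalIntegrable_map_cfc_xlogxIntegrand L).const_mul p
  · exact (h₂.intervalIntegrable_map_cfc_xlogxIntegrand L).const_mul q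

theorem PosSemidef.re_trace_cfc_xlogx_add_le {B C : Matrix n n 𝕜} (hB : B.PosSemidef)
    (hC : C.PosSemidef) :
    RCLike.re (cfc (fun x => x * Real.log x) B).trace +
        RCLike.re (cfc (fun x => x * Real.log x) C).trace ≤
      RCLike.re (cfc (fun x => x * Real.log x) (B + C)).trace := by
  let L : Matrix n n 𝕜 →ₗ[ℝ] ℝ := RCLike.reLm.comp ((traceLinearMap n 𝕜 𝕜).restrictScalars ℝ)
  change L _ + L _ ≤ L _
  rw [← sub_nonneg, ← hB.integral_map_cfc_xlogxIntegrand, ← hC.integral_map_cfc_xlogxIntegrand,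
    ← (hB.add hC).integral_map_cfc_xlogxIntegrand, ← intervalIntegral.integral_add,
    ← intervalIntegral.integral_sub]
  · exact integral_nonneg_of_forall_mem_Ioo zero_le_one fun t ht =>
      sub_nonneg.mpr (hB.re_trace_cfc_xlogxIntegrand_add_le hC ht)
  · exact (hB.add hC).intervalIntegrable_map_cfc_xlogxIntegrand L
  · exact (hB.intervalIntegrable_map_cfc_xlogxIntegrand L).add
      (hC.intervalIntegrable_map_cfc_xlogxIntegrand L)
  · exact hB.intervalIntegrable_map_cfc_xlogxIntegrand L
  · exact hC.intervalIntegrable_map_cfc_xlogxIntegrand L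

lemma IsHermitian.cfc_xlogx_smul {A : Matrix n n 𝕜} (hA : A.IsHermitian) (c : ℝ) :
    cfc (fun x => x * Real.log x) (c • A) =
      c • cfc (fun x => x * Real.log x) A + (c * Real.log c) • A := by
  have hcont (g : ℝ → ℝ) : ContinuousOn g (spectrum ℝ A) := A.finite_real_spectrum.continuousOn g
  have hscale (x : ℝ) : c • x * Real.log (c • x) = c * (x * Real.log x) + c * Real.log c * x := by
    have := Real.negMulLog_mul c x
    simp only [Real.negMulLog, smul_eq_mul] at this ⊢
    linarith
  rw [← cfc_comp_smul c _ A ((A.finite_real_spectrum.image _).continuousOn _),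
    cfc_congr fun x _ => hscale x, cfc_add _ _ _ (hcont _) (hcont _), cfc_const_mul _ _ _ (hcont _),
    cfc_const_mul_id _ A]

open scoped MatrixOrder in
lemma PosSemidef.posSemidef_smul_one_sub_of_re_trace_le {D : Matrix n n 𝕜} (hD : D.PosSemidef)
    {c : ℝ} (hc : RCLike.re D.trace ≤ c) : (c • 1 - D).PosSemidef := by
  rw [← Algebra.algebraMap_eq_smul_one, ← le_iff]
  refine le_algebraMap_of_spectrum_le fun x hx => hc.trans' ?_
  obtain ⟨i, rfl⟩ := hD.1.spectrum_real_eq_range_eigenvalues ▸ hx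
  rw [hD.1.trace_eq_sum_eigenvalues, map_sum]
  simp only [RCLike.ofReal_re]
  exact Finset.single_le_sum (fun j _ => hD.eigenvalues_nonneg j) (Finset.mem_univ i)

end Matrix

namespace QPaper

lemma mXLogX_eq_cfc {n : Type*} [Fintype n] [DecidableEq n] {A : Matrix n n ℂ}
    (hA : A.IsHermitian) : mXLogX A = cfc (fun x => x * Real.log x) A := by
  rw [hA.cfc_eq, mXLogX, matFun, dif_pos hA]
  rfl

/-- **Almost concavity of `x ↦ -x log x` as an operator inequality**. -/
theorem almost_concavity_xlogx {d : ℕ}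
    (A₁ A₂ : Matrix (Fin d) (Fin d) ℂ)
    (h₁ : A₁.PosSemidef) (h₂ : A₂.PosSemidef)
    (p : ℝ) (hp : p ∈ Set.Icc (0:ℝ) 1) :
    ((-(p * Real.log p * (A₁.trace).re) - (1 - p) * Real.log (1 - p) * (A₂.trace).re) •
        (1 : Matrix (Fin d) (Fin d) ℂ)
      + (-(p • mXLogX A₁) - (1 - p) • mXLogX A₂)
      + mXLogX (p • A₁ + (1 - p) • A₂)).PosSemidef := by
  obtain ⟨hp₀, hp₁⟩ := hp
  have hq₀ : 0 ≤ 1 - p := sub_nonneg.mpr hp₁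
  have hA := (h₁.smul hp₀).add (h₂.smul hq₀)
  rw [mXLogX_eq_cfc h₁.1, mXLogX_eq_cfc h₂.1, mXLogX_eq_cfc hA.1]
  set D := p • cfc (fun x => x * Real.log x) A₁ + (1 - p) • cfc (fun x => x * Real.log x) A₂ -
    cfc (fun x => x * Real.log x) (p • A₁ + (1 - p) • A₂)
  have hD : D.PosSemidef := h₁.posSemidef_convex_cfc_xlogx h₂ hp₀ hq₀ (by ring)
  have htr : RCLike.re D.trace ≤
      -(p * Real.log p * (A₁.trace).re) - (1 - p) * Real.log (1 - p) * (A₂.trace).re := by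
    have := (h₁.smul hp₀).re_trace_cfc_xlogx_add_le (h₂.smul hq₀)
    rw [h₁.1.cfc_xlogx_smul, h₂.1.cfc_xlogx_smul] at this
    simp only [D, trace_add, trace_sub, trace_smul, map_add, map_sub, RCLike.smul_re,
      RCLike.re_to_complex] at this ⊢
    linarith
  have key := hD.posSemidef_smul_one_sub_of_re_trace_le htr
  simp only [D] at key
  abel_nf at key ⊢
  exact key

end QPaper
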